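/- arXiv:2104.06263 — 2 statements merged into one kernel-verified Lean document; each statement's English description precedes it below -/
import Mathlib

section
/- For every positive integer n, e^n is irrational. -/
/-!
Hermite's argument. For `m ≠ 0`, the analytic part of the Lindemann–Weierstrass theorem, applied to
the polynomial `X - m`, gives for every large prime `p` integers `N`, `g` with `p ∤ N` and
`|N e^m - p g| ≤ c^p / (p-1)!`. If `e^m = a / b`, then `b (N e^m - p g) = N a - p g b` is an integer,
nonzero because `p ∤ N a` once `p > |a|`, yet of absolute value `< 1` for `p` large.
-/

open Polynomial Filter Topology
open scoped Nat

theorem exists_prime_approx_exp_intCast {m : ℤ} (hm : m ≠ 0) :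
    ∃ c : ℝ, ∀ p > m.natAbs, p.Prime → ∃ N g : ℤ, ¬ (p : ℤ) ∣ N ∧
      |N * Real.exp m - p * g| ≤ c ^ p / (p - 1)! := by
  obtain ⟨c, hc⟩ := LindemannWeierstrass.exp_polynomial_approx (X - C m) (by simpa using hm)
  refine ⟨c, fun p hp hpp => ?_⟩
  obtain ⟨N, hN, g, -, hg⟩ := hc p (by simpa using hp) hpp
  refine ⟨N, g.eval m, hN, ?_⟩
  have hroot : (m : ℂ) ∈ (X - C m).aroots ℂ :=
    mem_aroots.2 ⟨X_sub_C_ne_zero m, by simp⟩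
  have heval : aeval (m : ℂ) g = ((g.eval m : ℤ) : ℂ) := by
    simpa using aeval_algebraMap_apply_eq_algebraMap_eval (A := ℂ) m g
  rw [← Real.norm_eq_abs, ← Complex.norm_real]
  convert hg hroot using 2
  simp [Complex.ofReal_exp, heval]

theorem tendsto_pow_div_factorial_pred_atTop (c : ℝ) :
    Tendsto (fun p : ℕ => c ^ p / (p - 1)!) atTop (𝓝 0) := by
  rw [← tendsto_add_atTop_iff_nat 1]
  simpa [pow_succ, div_mul_eq_mul_div] using
    (FloorSemiring.tendsto_pow_div_factorial_atTop c).mul_const c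

theorem irrational_of_prime_approx {x c : ℝ} (hx : x ≠ 0) (p₀ : ℕ)
    (h : ∀ p > p₀, p.Prime → ∃ N g : ℤ, ¬ (p : ℤ) ∣ N ∧ |N * x - p * g| ≤ c ^ p / (p - 1)!) :
    Irrational x := by
  rw [irrational_iff_ne_rational]
  rintro a b hb rfl
  have ha : a ≠ 0 := by rintro rfl; simp at hx
  have hsmall : ∀ᶠ p : ℕ in atTop, |(b : ℝ)| * (c ^ p / (p - 1)!) < 1 := by
    refine ((tendsto_pow_div_factorial_pred_atTop c).const_mul |(b : ℝ)|).eventually_lt_const ?_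
    simp
  obtain ⟨K, hK⟩ := (hsmall.and (eventually_gt_atTop (max p₀ a.natAbs))).exists_forall_of_atTop
  obtain ⟨p, hKp, hp⟩ := Nat.exists_infinite_primes K
  obtain ⟨hp_small, hp_large⟩ := hK p hKp
  obtain ⟨N, g, hN, hNg⟩ := h p (lt_of_le_of_lt (le_max_left _ _) hp_large) hp
  have hzero : N * a - p * g * b = 0 := by
    rw [← Int.abs_lt_one_iff, ← Int.cast_lt (R := ℝ), Int.cast_one]
    calc ((|N * a - p * g * b| : ℤ) : ℝ) = |(b : ℝ)| * |(N : ℝ) * (a / b) - p * g| := by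
          rw [← abs_mul]; push_cast; congr 1; field_simp
      _ ≤ |(b : ℝ)| * (c ^ p / (p - 1)!) := by gcongr
      _ < 1 := hp_small
  have hdvd : (p : ℤ) ∣ N * a := ⟨g * b, by linear_combination hzero⟩
  rcases Int.Prime.dvd_mul' hp hdvd with hNp | hap
  · exact hN hNp
  · have := Nat.le_of_dvd (Int.natAbs_pos.2 ha) (Int.natCast_dvd.1 hap)
    omega

theorem irrational_exp_intCast {m : ℤ} (hm : m ≠ 0) : Irrational (Real.exp m) := by
  obtain ⟨c, hc⟩ := exists_prime_approx_exp_intCast hm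
  exact irrational_of_prime_approx (Real.exp_pos _).ne' m.natAbs hc

theorem exp_pow_irrational (n : ℕ) (hn : 0 < n) :
    Irrational (Real.exp 1 ^ n) := by
  rw [← Real.exp_nat_mul, mul_one]
  exact_mod_cast irrational_exp_intCast (m := n) (by omega)
end

section
/- For every nonzero rational number r, coth(r) = cosh(r)/sinh(r) is irrational. -/
/-!
Cartwright's argument for the irrationality of `π`, with `cos` replaced by `cosh`. Integrating
`Iₙ(θ) = ∫₋₁¹ (1 - x²)ⁿ cosh (x θ) dx` by parts twice gives a three-term recursion for `Iₙ(θ) θ²`,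
so for `θ = a / b` the numbers `a ^ (2n + 1) Iₙ(θ) / n!` are integer combinations of `sinh θ` and
`cosh θ`. They are nonzero and tend to `0`. If `cosh θ = (p / q) sinh θ`, every nonzero integer
combination of `sinh θ` and `cosh θ` is a nonzero integer multiple of `sinh θ / q`, so this is
impossible.
-/

open intervalIntegral Real Filter Topology
open scoped Nat

theorem irrational_div_of_mem_span_of_tendsto_zero {s c : ℝ} (hs : s ≠ 0) {F : ℕ → ℝ}
    (hF : ∀ n, F n ∈ Submodule.span ℤ ({s, c} : Set ℝ)) (hF₀ : ∀ n, F n ≠ 0)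
    (hlim : Tendsto F atTop (𝓝 0)) : Irrational (c / s) := by
  rintro ⟨q, hq⟩
  have hc : (q.den : ℝ) * c = q.num * s := by
    rw [Rat.cast_def] at hq
    field_simp at hq
    linear_combination -hq
  have hgap (n : ℕ) : |s| ≤ q.den * |F n| := by
    obtain ⟨m, k, hmk⟩ := Submodule.mem_span_pair.1 (hF n)
    have hN : (q.den : ℝ) * F n = ((q.den * m + q.num * k : ℤ) : ℝ) * s := by
      rw [← hmk, zsmul_eq_mul, zsmul_eq_mul]
      push_cast
      linear_combination k * hc
    have hN₀ : (q.den * m + q.num * k : ℤ) ≠ 0 := by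
      intro h
      simp [h, hF₀ n] at hN
    calc |s| ≤ |((q.den * m + q.num * k : ℤ) : ℝ)| * |s| :=
          le_mul_of_one_le_left (abs_nonneg s) (by exact_mod_cast Int.one_le_abs hN₀)
      _ = q.den * |F n| := by rw [← abs_mul, ← hN, abs_mul, Nat.abs_cast]
  have hsmall : Tendsto (fun n => (q.den : ℝ) * |F n|) atTop (𝓝 0) := by
    simpa using (hlim.abs.const_mul (q.den : ℝ))
  obtain ⟨n, hn⟩ := (hsmall.eventually_lt_const (abs_pos.2 hs)).exists
  exact (hgap n).not_gt hn

noncomputable def cartwrightIntegral (n : ℕ) (θ : ℝ) : ℝ :=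
  ∫ x in (-1)..1, (1 - x ^ 2) ^ n * cosh (x * θ)

lemma cartwrightIntegral_zero_mul (θ : ℝ) : cartwrightIntegral 0 θ * θ = 2 * sinh θ := by
  have h := integral_eq_sub_of_hasDerivAt (a := -1) (b := 1)
    (fun x _ => (hasDerivAt_mul_const θ).sinh) (Continuous.intervalIntegrable (by fun_prop) _ _)
  rw [cartwrightIntegral, ← integral_mul_const]
  simp only [pow_zero, one_mul] at h ⊢
  rw [h, neg_one_mul, sinh_neg]
  ring

lemma hasDerivAt_one_sub_sq_pow (n : ℕ) (x : ℝ) :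
    HasDerivAt (fun x : ℝ => (1 - x ^ 2) ^ n) (-(2 * n * x * (1 - x ^ 2) ^ (n - 1))) x :=
  (((hasDerivAt_pow 2 x).const_sub 1).fun_pow n).congr_deriv (by push_cast; ring)

lemma cartwrightIntegral_succ_mul (n : ℕ) (θ : ℝ) :
    cartwrightIntegral (n + 1) θ * θ =
      2 * (n + 1) * ∫ x in (-1)..1, x * (1 - x ^ 2) ^ n * sinh (x * θ) := by
  calc cartwrightIntegral (n + 1) θ * θ
      = ∫ x in (-1)..1, (1 - x ^ 2) ^ (n + 1) * (cosh (x * θ) * θ) := by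
        simp only [cartwrightIntegral, ← integral_mul_const, mul_assoc]
    _ = -∫ x in (-1)..1, -(2 * (n + 1 : ℕ) * x * (1 - x ^ 2) ^ n) * sinh (x * θ) := by
        rw [integral_mul_deriv_eq_deriv_mul (fun x _ => hasDerivAt_one_sub_sq_pow (n + 1) x)
          (fun x _ => (hasDerivAt_mul_const θ).sinh)
          (Continuous.intervalIntegrable (by fun_prop) _ _)
          (Continuous.intervalIntegrable (by fun_prop) _ _)]
        norm_num
    _ = _ := by
        rw [← integral_neg, ← integral_const_mul]
        congr 1 with x
        push_cast
        ring

/- `0 ^ n` is the boundary term `[x (1 - x²)ⁿ cosh (x θ)]₋₁¹`; the truncated `n - 1` only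
occurs multiplied by `n`. -/
lemma integral_mul_one_sub_sq_pow_mul_sinh_mul (n : ℕ) (θ : ℝ) :
    (∫ x in (-1)..1, x * (1 - x ^ 2) ^ n * sinh (x * θ)) * θ =
      2 * 0 ^ n * cosh θ - (2 * n + 1) * cartwrightIntegral n θ +
        2 * n * cartwrightIntegral (n - 1) θ := by
  have hu (x : ℝ) : HasDerivAt (fun x : ℝ => x * (1 - x ^ 2) ^ n)
      ((2 * n + 1) * (1 - x ^ 2) ^ n - 2 * n * (1 - x ^ 2) ^ (n - 1)) x := by
    refine ((hasDerivAt_id x).fun_mul (hasDerivAt_one_sub_sq_pow n x)).congr_deriv ?_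
    rcases n with _ | n
    · simp
    · simp only [id, add_tsub_cancel_right, pow_succ]
      push_cast
      ring
  calc (∫ x in (-1)..1, x * (1 - x ^ 2) ^ n * sinh (x * θ)) * θ
      = ∫ x in (-1)..1, x * (1 - x ^ 2) ^ n * (sinh (x * θ) * θ) := by
        simp only [← integral_mul_const, mul_assoc]
    _ = 2 * 0 ^ n * cosh θ - ∫ x in (-1)..1,
          ((2 * n + 1) * (1 - x ^ 2) ^ n - 2 * n * (1 - x ^ 2) ^ (n - 1)) * cosh (x * θ) := by
        rw [integral_mul_deriv_eq_deriv_mul (fun x _ => hu x)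
          (fun x _ => (hasDerivAt_mul_const θ).cosh)
          (Continuous.intervalIntegrable (by fun_prop) _ _)
          (Continuous.intervalIntegrable (by fun_prop) _ _)]
        norm_num
        ring
    _ = _ := by
        have hint (k : ℕ) : IntervalIntegrable (fun x : ℝ => (1 - x ^ 2) ^ k * cosh (x * θ))
            MeasureTheory.volume (-1) 1 := Continuous.intervalIntegrable (by fun_prop) _ _
        simp_rw [sub_mul, mul_assoc _ (_ ^ _) (cosh _)]
        rw [integral_sub ((hint n).const_mul _) ((hint _).const_mul _), integral_const_mul,
          integral_const_mul, cartwrightIntegral, cartwrightIntegral]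
        ring

lemma cartwrightIntegral_one_mul (θ : ℝ) :
    cartwrightIntegral 1 θ * θ ^ 3 = 4 * θ * cosh θ - 4 * sinh θ := by
  linear_combination θ ^ 2 * cartwrightIntegral_succ_mul 0 θ +
    2 * θ * integral_mul_one_sub_sq_pow_mul_sinh_mul 0 θ - 2 * cartwrightIntegral_zero_mul θ

lemma cartwrightIntegral_add_two_mul_sq (n : ℕ) (θ : ℝ) :
    cartwrightIntegral (n + 2) θ * θ ^ 2 =
      4 * (n + 2) * (n + 1) * cartwrightIntegral n θ -
        2 * (n + 2) * (2 * n + 3) * cartwrightIntegral (n + 1) θ := by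
  have h₁ := cartwrightIntegral_succ_mul (n + 1) θ
  have h₂ := integral_mul_one_sub_sq_pow_mul_sinh_mul (n + 1) θ
  push_cast at h₁ h₂
  linear_combination θ * h₁ + 2 * (n + 2) * h₂

lemma cartwrightIntegral_pos (n : ℕ) (θ : ℝ) : 0 < cartwrightIntegral n θ := by
  refine integral_pos (by norm_num) (by fun_prop) (fun x hx => ?_) ⟨0, by simp⟩
  refine mul_nonneg (pow_nonneg ?_ _) (cosh_pos _).le
  nlinarith [hx.1, hx.2]

lemma cartwrightIntegral_le_two_mul_cosh (n : ℕ) (θ : ℝ) :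
    cartwrightIntegral n θ ≤ 2 * cosh θ := by
  have hbound (x : ℝ) (hx : x ∈ Set.uIoc (-1 : ℝ) 1) :
      ‖(1 - x ^ 2) ^ n * cosh (x * θ)‖ ≤ cosh θ := by
    rw [Set.uIoc_of_le (by norm_num)] at hx
    have hx' : |x| ≤ 1 := abs_le.2 ⟨hx.1.le, hx.2⟩
    rw [norm_mul, norm_pow, Real.norm_of_nonneg (cosh_pos _).le]
    have hpow : ‖1 - x ^ 2‖ ^ n ≤ 1 := by
      refine pow_le_one₀ (norm_nonneg _) ?_
      rw [Real.norm_eq_abs, abs_le]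
      constructor <;> nlinarith [abs_le.1 hx']
    have hcosh : cosh (x * θ) ≤ cosh θ := by
      rw [cosh_le_cosh, abs_mul]
      exact mul_le_of_le_one_left (abs_nonneg θ) hx'
    exact (mul_le_of_le_one_left (cosh_pos _).le hpow).trans hcosh
  calc cartwrightIntegral n θ ≤ ‖cartwrightIntegral n θ‖ := Real.le_norm_self _
    _ ≤ cosh θ * |1 - (-1)| := norm_integral_le_of_norm_le_const hbound
    _ = 2 * cosh θ := by norm_num; ring

lemma tendsto_pow_mul_cartwrightIntegral_div_factorial (a θ : ℝ) :
    Tendsto (fun n : ℕ => a ^ (2 * n + 1) * cartwrightIntegral n θ / n !) atTop (𝓝 0) := by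
  have hpow : Tendsto (fun n : ℕ => a * ((a ^ 2) ^ n / n !)) atTop (𝓝 0) := by
    simpa using (FloorSemiring.tendsto_pow_div_factorial_atTop (a ^ 2)).const_mul a
  have hbdd : IsBoundedUnder (· ≤ ·) atTop ((‖·‖) ∘ fun n => cartwrightIntegral n θ) :=
    isBoundedUnder_of ⟨2 * cosh θ, fun n => by
      simpa [abs_of_pos (cartwrightIntegral_pos n θ)] using
        cartwrightIntegral_le_two_mul_cosh n θ⟩
  refine (hpow.zero_mul_isBoundedUnder_le hbdd).congr fun n => ?_
  rw [← pow_mul]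
  ring

lemma pow_mul_cartwrightIntegral_div_factorial_mem_span (a : ℤ) {b : ℕ} (hb : b ≠ 0) :
    ∀ n : ℕ, a ^ (2 * n + 1) * cartwrightIntegral n (a / b) / n ! ∈
      Submodule.span ℤ ({sinh (a / b), cosh (a / b)} : Set ℝ)
  | 0 => Submodule.mem_span_pair.2 ⟨2 * b, 0, by
      have := cartwrightIntegral_zero_mul (a / b)
      simp only [zsmul_eq_mul]
      push_cast
      field_simp at this ⊢
      linear_combination -this⟩
  | 1 => Submodule.mem_span_pair.2 ⟨-4 * b ^ 3, 4 * a * b ^ 2, by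
      have := cartwrightIntegral_one_mul (a / b)
      simp only [zsmul_eq_mul]
      push_cast
      field_simp at this ⊢
      linear_combination -this⟩
  | n + 2 => by
      have h := cartwrightIntegral_add_two_mul_sq n (a / b)
      have key : a ^ (2 * (n + 2) + 1) * cartwrightIntegral (n + 2) (a / b) / (n + 2)! =
          (4 * a ^ 2 * b ^ 2 : ℤ) • (a ^ (2 * n + 1) * cartwrightIntegral n (a / b) / n !) +
          (-2 * (2 * n + 3) * b ^ 2 : ℤ) •
            (a ^ (2 * (n + 1) + 1) * cartwrightIntegral (n + 1) (a / b) / (n + 1)!) := by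
        simp only [zsmul_eq_mul, Nat.factorial_succ]
        push_cast
        field_simp at h ⊢
        linear_combination a ^ (2 * n + 3) * h
      rw [key]
      exact add_mem
        (Submodule.smul_mem _ _ (pow_mul_cartwrightIntegral_div_factorial_mem_span a hb n))
        (Submodule.smul_mem _ _ (pow_mul_cartwrightIntegral_div_factorial_mem_span a hb (n + 1)))

theorem coth_nonzero_rat_irrational (r : ℚ) (hr : r ≠ 0) :
    Irrational (Real.cosh (r : ℝ) / Real.sinh (r : ℝ)) := by
  have hsinh : sinh (r : ℝ) ≠ 0 := by simpa using hr
  have hnum : (r.num : ℝ) ≠ 0 := by exact_mod_cast Rat.num_ne_zero.2 hr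
  rw [Rat.cast_def] at hsinh ⊢
  refine irrational_div_of_mem_span_of_tendsto_zero hsinh
    (pow_mul_cartwrightIntegral_div_factorial_mem_span r.num r.den_nz) (fun n => ?_)
    (tendsto_pow_mul_cartwrightIntegral_div_factorial _ _)
  exact div_ne_zero (mul_ne_zero (pow_ne_zero _ hnum) (cartwrightIntegral_pos _ _).ne')
    (by positivity)
end
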